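/- Shearer's inequality: if 𝒜 is a multiset of subsets of [n] = {1,…,n} such that every i ∈ [n] belongs to at least k members of 𝒜 (counted with multiplicity), then k·H(X₁,…,Xₙ) ≤ ∑_{A∈𝒜} H(X_A) for any discrete random variables X₁,…,Xₙ with finite joint entropy. -/

import Mathlib

/-!
By the chain rule, `H(X_A) = ∑_{i ∈ A} H(X_i | X_j, j ∈ A, j < i)`, and since conditioning on
more variables can only lower entropy, each term is at least `c_i = H(X_i | X_j, j < i)`.
Summing over `A ∈ 𝒜`, every `c_i ≥ 0` is counted at least `k` times, while `∑_i c_i = H(X)`.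

That conditioning lowers entropy, `H(X | Y, Z) ≤ H(X | Y)`, comes from `log x ≤ x - 1` applied to
the ratio `P(x, y) P(y, z) / (P(y) P(x, y, z))`, whose expectation is at most one.
-/

open Finset

/-- Probability that the discrete random variable `X` takes the value `v`,
where `p` is the probability mass function on the finite sample space `Ω`. -/
noncomputable def probOf {Ω S : Type*} [Fintype Ω] [DecidableEq S]
    (p : Ω → ℝ) (X : Ω → S) (v : S) : ℝ :=
  ∑ ω ∈ univ.filter (fun ω => X ω = v), p ω

/-- Shannon entropy (base 2) of a discrete random variable. -/
noncomputable def H {Ω S : Type*} [Fintype Ω] [DecidableEq S]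
    (p : Ω → ℝ) (X : Ω → S) : ℝ :=
  -∑ v ∈ univ.image X, probOf p X v * Real.logb 2 (probOf p X v)

/-- Conditional Shannon entropy `H(X | Y)`. -/
noncomputable def condH {Ω S T : Type*} [Fintype Ω] [DecidableEq S] [DecidableEq T]
    (p : Ω → ℝ) (X : Ω → S) (Y : Ω → T) : ℝ :=
  -∑ v ∈ univ.image (fun ω => (X ω, Y ω)),
      probOf p (fun ω => (X ω, Y ω)) v *
        Real.logb 2 (probOf p (fun ω => (X ω, Y ω)) v / probOf p Y v.2)

/-- Joint entropy of the subfamily `(X i)_{i ∈ A}`. -/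
noncomputable def jointH {Ω S : Type*} [Fintype Ω] [DecidableEq S] {n : ℕ}
    (p : Ω → ℝ) (X : Fin n → Ω → S) (A : Finset (Fin n)) : ℝ :=
  H p (fun ω (i : {i // i ∈ A}) => X i.1 ω)

/-- Conditional joint entropy `H(X_A | X_B)`. -/
noncomputable def condJointH {Ω S : Type*} [Fintype Ω] [DecidableEq S] {n : ℕ}
    (p : Ω → ℝ) (X : Fin n → Ω → S) (A B : Finset (Fin n)) : ℝ :=
  condH p (fun ω (i : {i // i ∈ A}) => X i.1 ω) (fun ω (i : {i // i ∈ B}) => X i.1 ω)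

section Distribution

variable {Ω S T : Type*} [Fintype Ω] [DecidableEq S] [DecidableEq T] (p : Ω → ℝ)

lemma probOf_nonneg (hp : ∀ ω, 0 ≤ p ω) (X : Ω → S) (v : S) : 0 ≤ probOf p X v :=
  sum_nonneg fun ω _ => hp ω

lemma le_probOf_apply (hp : ∀ ω, 0 ≤ p ω) (X : Ω → S) (ω : Ω) : p ω ≤ probOf p X (X ω) :=
  single_le_sum (fun ω' _ => hp ω') (by simp)

lemma probOf_apply_pos (hp : ∀ ω, 0 ≤ p ω) (X : Ω → S) {ω : Ω} (hω : 0 < p ω) :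
    0 < probOf p X (X ω) :=
  hω.trans_le (le_probOf_apply p hp X ω)

lemma sum_image_probOf_mul (X : Ω → S) (F : S → ℝ) :
    ∑ v ∈ univ.image X, probOf p X v * F v = ∑ ω, p ω * F (X ω) := by
  rw [← sum_fiberwise_of_maps_to (fun ω _ => mem_image_of_mem X (mem_univ ω))]
  refine sum_congr rfl fun v _ => ?_
  rw [probOf, sum_mul]
  exact sum_congr rfl fun ω hω => by rw [(mem_filter.mp hω).2]

lemma sum_image_probOf (X : Ω → S) : ∑ v ∈ univ.image X, probOf p X v = ∑ ω, p ω := by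
  simpa using sum_image_probOf_mul p X 1

lemma sum_filter_probOf_eq_probOf_comp (V : Ω → S) (G : S → T) (y : T) :
    ∑ v ∈ (univ.image V).filter (fun v => G v = y), probOf p V v =
      probOf p (fun ω => G (V ω)) y := by
  rw [probOf, ← sum_fiberwise_of_maps_to (g := V) (t := (univ.image V).filter (G · = y))
    (by intro ω hω; simpa using (mem_filter.mp hω).2)]
  refine sum_congr rfl fun v hv => ?_
  rw [probOf, filter_filter]
  congr 1
  ext ω
  simp only [mem_filter, mem_univ, true_and]
  exact (and_iff_right_of_imp fun h => h ▸ (mem_filter.mp hv).2).symm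

lemma probOf_le_probOf_comp (hp : ∀ ω, 0 ≤ p ω) (V : Ω → S) (G : S → T) (v : S) :
    probOf p V v ≤ probOf p (fun ω => G (V ω)) (G v) :=
  sum_le_sum_of_subset_of_nonneg (fun ω hω => by simp_all) (fun ω _ _ => hp ω)

lemma probOf_comp_of_injective (X : Ω → S) {e : S → T} (he : Function.Injective e) (v : S) :
    probOf p (fun ω => e (X ω)) (e v) = probOf p X v := by
  simp only [probOf, he.eq_iff]

lemma sum_mul_congr_of_pos (hp : ∀ ω, 0 ≤ p ω) {f g : Ω → ℝ} (h : ∀ ω, 0 < p ω → f ω = g ω) :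
    ∑ ω, p ω * f ω = ∑ ω, p ω * g ω := by
  refine sum_congr rfl fun ω _ => ?_
  rcases (hp ω).eq_or_lt with h0 | hpos
  · simp [← h0]
  · rw [h ω hpos]

end Distribution

section Entropy

variable {Ω S T U : Type*} [Fintype Ω] [DecidableEq S] [DecidableEq T] [DecidableEq U]
  (p : Ω → ℝ)

lemma H_eq_sum (X : Ω → S) : H p X = -∑ ω, p ω * Real.logb 2 (probOf p X (X ω)) := by
  rw [H, sum_image_probOf_mul p X (fun v => Real.logb 2 (probOf p X v))]

lemma condH_eq_sum (X : Ω → S) (Y : Ω → T) :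
    condH p X Y = -∑ ω, p ω *
      Real.logb 2 (probOf p (fun ω => (X ω, Y ω)) (X ω, Y ω) / probOf p Y (Y ω)) := by
  rw [condH, sum_image_probOf_mul p (fun ω => (X ω, Y ω))
    (fun v => Real.logb 2 (probOf p (fun ω => (X ω, Y ω)) v / probOf p Y v.2))]

lemma H_eq_zero_of_const (hsum : ∑ ω, p ω = 1) (X : Ω → S) (hX : ∀ ω ω', X ω = X ω') :
    H p X = 0 := by
  have hprob : ∀ ω, probOf p X (X ω) = 1 := fun ω => by
    rw [probOf, filter_true_of_mem fun ω' _ => hX ω' ω, hsum]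
  simp [H_eq_sum, hprob]

lemma H_comp_of_injective (X : Ω → S) {e : S → T} (he : Function.Injective e) :
    H p (fun ω => e (X ω)) = H p X := by
  simp only [H_eq_sum, probOf_comp_of_injective p X he]

lemma condH_comp_of_injective {S' T' : Type*} [DecidableEq S'] [DecidableEq T']
    (X : Ω → S) (Y : Ω → T) {e : S → S'} {f : T → T'}
    (he : Function.Injective e) (hf : Function.Injective f) :
    condH p (fun ω => e (X ω)) (fun ω => f (Y ω)) = condH p X Y := by
  have hpair : ∀ ω, probOf p (fun ω => (e (X ω), f (Y ω))) (e (X ω), f (Y ω)) =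
      probOf p (fun ω => (X ω, Y ω)) (X ω, Y ω) := fun ω =>
    probOf_comp_of_injective p (fun ω => (X ω, Y ω)) (he.prodMap hf) (X ω, Y ω)
  simp only [condH_eq_sum, probOf_comp_of_injective p Y hf, hpair]

lemma H_pair_eq_add_condH (hp : ∀ ω, 0 ≤ p ω) (X : Ω → S) (Y : Ω → T) :
    H p (fun ω => (X ω, Y ω)) = H p Y + condH p X Y := by
  rw [H_eq_sum, H_eq_sum, condH_eq_sum, ← neg_add, ← sum_add_distrib]
  simp only [← mul_add]
  congr 1
  refine sum_mul_congr_of_pos p hp fun ω hω => ?_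
  rw [Real.logb_div (probOf_apply_pos p hp _ hω).ne' (probOf_apply_pos p hp Y hω).ne']
  ring

lemma condH_nonneg (hp : ∀ ω, 0 ≤ p ω) (X : Ω → S) (Y : Ω → T) : 0 ≤ condH p X Y := by
  rw [condH_eq_sum, neg_nonneg]
  refine sum_nonpos fun ω _ => mul_nonpos_of_nonneg_of_nonpos (hp ω) ?_
  refine Real.logb_nonpos one_lt_two
    (div_nonneg (probOf_nonneg p hp _ _) (probOf_nonneg p hp Y _)) (div_le_one_of_le₀ ?_ ?_)
  · exact probOf_le_probOf_comp p hp (fun ω => (X ω, Y ω)) Prod.snd (X ω, Y ω)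
  · exact probOf_nonneg p hp Y _

end Entropy

lemma mul_div_le_of_nonneg {a : ℝ} (ha : 0 ≤ a) (b : ℝ) : b * (a / b) ≤ a := by
  rcases eq_or_ne b 0 with rfl | hb
  · simpa using ha
  · rw [mul_div_cancel₀ _ hb]

lemma sum_mul_logb_nonpos {ι : Type*} [Fintype ι] {w f : ι → ℝ} (hw : ∀ i, 0 ≤ w i)
    (hf : ∀ i, 0 < w i → 0 < f i) (h : ∑ i, w i * f i ≤ ∑ i, w i) :
    ∑ i, w i * Real.logb 2 (f i) ≤ 0 := by
  have hlog2 : 0 < Real.log 2 := Real.log_pos one_lt_two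
  have hterm : ∀ i, w i * Real.logb 2 (f i) ≤ (w i * f i - w i) / Real.log 2 := fun i => by
    rcases (hw i).eq_or_lt with h0 | hpos
    · simp [← h0]
    · rw [Real.logb, le_div_iff₀ hlog2, mul_div_assoc', div_mul_cancel₀ _ hlog2.ne', ← mul_sub_one]
      exact mul_le_mul_of_nonneg_left (Real.log_le_sub_one_of_pos (hf i hpos)) hpos.le
  calc ∑ i, w i * Real.logb 2 (f i) ≤ ∑ i, (w i * f i - w i) / Real.log 2 :=
        sum_le_sum fun i _ => hterm i
    _ = (∑ i, w i * f i - ∑ i, w i) / Real.log 2 := by rw [← sum_div, sum_sub_distrib]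
    _ ≤ 0 := div_nonpos_of_nonpos_of_nonneg (sub_nonpos.mpr h) hlog2.le

section ConditioningReducesEntropy

variable {Ω S T U : Type*} [Fintype Ω] [DecidableEq S] [DecidableEq T] [DecidableEq U]
  (p : Ω → ℝ)

/-- The law `(X, Y, Z)` would have if `X` and `Z` were conditionally independent given `Y`. -/
noncomputable def condIndepProbOf (X : Ω → S) (Y : Ω → T) (Z : Ω → U) (w : S × T × U) : ℝ :=
  probOf p (fun ω => (X ω, Y ω)) (w.1, w.2.1) * probOf p (fun ω => (Y ω, Z ω)) w.2 /
    probOf p Y w.2.1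

lemma sum_condIndepProbOf_le (hp : ∀ ω, 0 ≤ p ω) (X : Ω → S) (Y : Ω → T) (Z : Ω → U) :
    ∑ w ∈ univ.image (fun ω => (X ω, Y ω, Z ω)), condIndepProbOf p X Y Z w ≤ ∑ ω, p ω := by
  set XY := fun ω => (X ω, Y ω)
  set YZ := fun ω => (Y ω, Z ω)
  have hmaps : ∀ w ∈ univ.image (fun ω => (X ω, Y ω, Z ω)), (w.1, w.2.1) ∈ univ.image XY := by
    simp only [mem_image, mem_univ, true_and]
    rintro _ ⟨ω, rfl⟩
    exact ⟨ω, rfl⟩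
  rw [← sum_fiberwise_of_maps_to hmaps, ← sum_image_probOf p XY]
  refine sum_le_sum fun a _ => ?_
  set fiber := (univ.image (fun ω => (X ω, Y ω, Z ω))).filter (fun w => (w.1, w.2.1) = a)
  have hfiber : ∑ w ∈ fiber, probOf p YZ w.2 ≤ probOf p Y a.2 := by
    rw [← sum_filter_probOf_eq_probOf_comp p YZ Prod.fst a.2]
    calc ∑ w ∈ fiber, probOf p YZ w.2
        ≤ ∑ w ∈ {a.1} ×ˢ (univ.image YZ).filter (·.1 = a.2), probOf p YZ w.2 := by
          refine sum_le_sum_of_subset_of_nonneg ?_ fun w _ _ => probOf_nonneg p hp YZ w.2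
          simp only [fiber, subset_iff, mem_filter, mem_image, mem_univ, true_and, mem_product,
            mem_singleton]
          rintro _ ⟨⟨ω, rfl⟩, rfl⟩
          exact ⟨rfl, ⟨ω, rfl⟩, rfl⟩
      _ = _ := by rw [sum_product, sum_singleton]
  calc ∑ w ∈ fiber, condIndepProbOf p X Y Z w
      = probOf p XY a / probOf p Y a.2 * ∑ w ∈ fiber, probOf p YZ w.2 := by
        rw [mul_sum]
        refine sum_congr rfl fun w hw => ?_
        have ha : (w.1, w.2.1) = a := (mem_filter.mp hw).2
        rw [condIndepProbOf, ha, ← congrArg Prod.snd ha, mul_div_right_comm]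
    _ ≤ probOf p XY a / probOf p Y a.2 * probOf p Y a.2 :=
        mul_le_mul_of_nonneg_left hfiber
          (div_nonneg (probOf_nonneg p hp XY a) (probOf_nonneg p hp Y a.2))
    _ ≤ probOf p XY a := by
        rw [mul_comm]
        exact mul_div_le_of_nonneg (probOf_nonneg p hp XY a) _

lemma condH_pair_le (hp : ∀ ω, 0 ≤ p ω) (X : Ω → S) (Y : Ω → T) (Z : Ω → U) :
    condH p X (fun ω => (Y ω, Z ω)) ≤ condH p X Y := by
  set W := fun ω => (X ω, Y ω, Z ω)
  set r := fun ω => condIndepProbOf p X Y Z (W ω) / probOf p W (W ω)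
  have hbound : ∑ ω, p ω * r ω ≤ ∑ ω, p ω :=
    calc ∑ ω, p ω * r ω
        = ∑ w ∈ univ.image W, probOf p W w * (condIndepProbOf p X Y Z w / probOf p W w) :=
          (sum_image_probOf_mul p W fun w => condIndepProbOf p X Y Z w / probOf p W w).symm
      _ ≤ ∑ w ∈ univ.image W, condIndepProbOf p X Y Z w := by
          refine sum_le_sum fun w _ => mul_div_le_of_nonneg ?_ _
          exact div_nonneg (mul_nonneg (probOf_nonneg p hp _ _) (probOf_nonneg p hp _ _))
            (probOf_nonneg p hp _ _)
      _ ≤ ∑ ω, p ω := sum_condIndepProbOf_le p hp X Y Z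
  have hr : ∀ ω, 0 < p ω → 0 < r ω := fun ω hω => by
    have hcond : 0 < condIndepProbOf p X Y Z (W ω) :=
      div_pos (mul_pos (probOf_apply_pos p hp (fun ω => (X ω, Y ω)) hω)
        (probOf_apply_pos p hp (fun ω => (Y ω, Z ω)) hω)) (probOf_apply_pos p hp Y hω)
    exact div_pos hcond (probOf_apply_pos p hp W hω)
  rw [condH_eq_sum, condH_eq_sum, neg_le_neg_iff, ← sub_nonpos, ← sum_sub_distrib]
  simp only [← mul_sub]
  convert sum_mul_logb_nonpos hp hr hbound using 1
  refine sum_mul_congr_of_pos p hp fun ω hω => ?_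
  have hXY := probOf_apply_pos p hp (fun ω => (X ω, Y ω)) hω
  have hY := probOf_apply_pos p hp Y hω
  have hW := probOf_apply_pos p hp W hω
  have hYZ := probOf_apply_pos p hp (fun ω => (Y ω, Z ω)) hω
  rw [← Real.logb_div (div_pos hXY hY).ne' (div_pos hW hYZ).ne']
  simp only [r, condIndepProbOf]
  field_simp
  rw [mul_comm (probOf p W (W ω))]

end ConditioningReducesEntropy

section Counting

variable {ι R : Type*} [Fintype ι] [DecidableEq ι] [CommSemiring R]

lemma sum_map_sum_eq_sum_card_filter_mul (c : ι → R) (𝒜 : Multiset (Finset ι)) :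
    (𝒜.map fun A => ∑ i ∈ A, c i).sum =
      ∑ i, (Multiset.card (𝒜.filter (fun A => i ∈ A)) : R) * c i := by
  induction 𝒜 using Multiset.induction_on with
  | empty => simp
  | cons A 𝒜 ih => simp [Multiset.filter_cons, ih, add_mul, sum_add_distrib, apply_ite, ite_mul]

lemma card_mul_sum_le_sum_map_sum [PartialOrder R] [IsOrderedRing R] {c : ι → R}
    (hc : ∀ i, 0 ≤ c i) {k : ℕ} {𝒜 : Multiset (Finset ι)}
    (hcov : ∀ i, k ≤ Multiset.card (𝒜.filter (fun A => i ∈ A))) :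
    (k : R) * ∑ i, c i ≤ (𝒜.map fun A => ∑ i ∈ A, c i).sum := by
  rw [sum_map_sum_eq_sum_card_filter_mul, mul_sum]
  exact sum_le_sum fun i _ => mul_le_mul_of_nonneg_right (Nat.mono_cast (hcov i)) (hc i)

end Counting

lemma injective_restrict₂_pair {ι S : Type*} [DecidableEq ι] {A B C : Finset ι}
    (hA : A ⊆ C) (hB : B ⊆ C) (hC : C ⊆ A ∪ B) :
    Function.Injective fun f : C → S =>
      (restrict₂ (π := fun _ => S) hA f, restrict₂ (π := fun _ => S) hB f) := by
  intro f g hfg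
  funext ⟨j, hj⟩
  rcases mem_union.mp (hC hj) with hjA | hjB
  · exact congrFun (congrArg Prod.fst hfg) ⟨j, hjA⟩
  · exact congrFun (congrArg Prod.snd hfg) ⟨j, hjB⟩

section JointEntropy

variable {Ω S : Type*} [Fintype Ω] [DecidableEq S] {n : ℕ} (p : Ω → ℝ) (X : Fin n → Ω → S)

lemma jointH_empty (hsum : ∑ ω, p ω = 1) : jointH p X ∅ = 0 :=
  H_eq_zero_of_const p hsum _ fun _ _ => Subsingleton.elim _ _

lemma jointH_union (hp : ∀ ω, 0 ≤ p ω) (A B : Finset (Fin n)) :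
    jointH p X (A ∪ B) = jointH p X B + condJointH p X A B :=
  (H_comp_of_injective p _ (injective_restrict₂_pair subset_union_left subset_union_right
    subset_rfl)).symm.trans (H_pair_eq_add_condH p hp _ _)

lemma condJointH_anti (hp : ∀ ω, 0 ≤ p ω) (A : Finset (Fin n)) {B' B : Finset (Fin n)}
    (hB : B' ⊆ B) : condJointH p X A B ≤ condJointH p X A B' :=
  (condH_comp_of_injective p _ _ (e := id) Function.injective_id
    (injective_restrict₂_pair hB sdiff_subset (union_sdiff_of_subset hB).ge)).symm.trans_le
    (condH_pair_le p hp _ _ _)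

lemma jointH_eq_sum_condJointH (hp : ∀ ω, 0 ≤ p ω) (hsum : ∑ ω, p ω = 1) (A : Finset (Fin n)) :
    jointH p X A = ∑ i ∈ A, condJointH p X {i} (A.filter (· < i)) := by
  induction A using Finset.induction_on_max with
  | empty => simp [jointH_empty p X hsum]
  | insert a s hlt ih =>
    have ha : a ∉ s := fun h => (hlt a h).false
    have hfilter_a : (insert a s).filter (· < a) = s := by
      rw [filter_insert, if_neg (lt_irrefl a), filter_true_of_mem hlt]
    have hfilter : ∀ i ∈ s, (insert a s).filter (· < i) = s.filter (· < i) := fun i hi => by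
      rw [filter_insert, if_neg (lt_asymm (hlt i hi))]
    rw [sum_insert ha, hfilter_a, sum_congr rfl fun i hi => by rw [hfilter i hi], ← ih,
      insert_eq, jointH_union p X hp, add_comm]

lemma sum_condJointH_le_jointH (hp : ∀ ω, 0 ≤ p ω) (hsum : ∑ ω, p ω = 1) (A : Finset (Fin n)) :
    ∑ i ∈ A, condJointH p X {i} (univ.filter (· < i)) ≤ jointH p X A := by
  rw [jointH_eq_sum_condJointH p X hp hsum A]
  exact sum_le_sum fun i _ => condJointH_anti p X hp {i} (filter_subset_filter _ (subset_univ A))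

end JointEntropy

/-- Shearer's inequality: if every `i ∈ [n]` lies in at least `k` members of the
multiset `𝒜` (counted with multiplicity), then `k·H(X) ≤ ∑_{A ∈ 𝒜} H(X_A)`. -/
theorem shearer {Ω S : Type*} [Fintype Ω] [DecidableEq S] {n : ℕ}
    (p : Ω → ℝ) (hp : ∀ ω, 0 ≤ p ω) (hsum : ∑ ω, p ω = 1)
    (X : Fin n → Ω → S) (k : ℕ) (𝒜 : Multiset (Finset (Fin n)))
    (hcov : ∀ i : Fin n, k ≤ Multiset.card (𝒜.filter (fun A => i ∈ A))) :
    (k : ℝ) * jointH p X univ ≤ (𝒜.map (fun A => jointH p X A)).sum := by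
  calc (k : ℝ) * jointH p X univ
      = k * ∑ i, condJointH p X {i} (univ.filter (· < i)) := by
        rw [jointH_eq_sum_condJointH p X hp hsum]
    _ ≤ (𝒜.map fun A => ∑ i ∈ A, condJointH p X {i} (univ.filter (· < i))).sum :=
        card_mul_sum_le_sum_map_sum (fun i => condH_nonneg p hp _ _) hcov
    _ ≤ (𝒜.map fun A => jointH p X A).sum :=
        Multiset.sum_map_le_sum_map _ _ fun A _ => sum_condJointH_le_jointH p X hp hsum A
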